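/- Let G be a temporal directed graph without self-loops, S ⊆ V a set of source vertices, and [tα,tω] a time interval; for v ∈ V let ea(v) denote the earliest arrival time from S to v within [tα,tω] (taking ea(v) = ∞ if unreachable). Then ea satisfies: ea(s) = tα for every s ∈ S, and for every v ∉ S, ea(v) = min{ t+1 : (u,v) ∈ E_t for some vertex u, tα ≤ t, t+1 ≤ tω, and ea(u) ≤ t }, where the minimum over the empty set is ∞. -/
import Mathlib


/-- A temporal `(s,d)`-path within the time interval `[tα, tω]` in a temporal directed
graph on vertex type `V` with time-indexed edge relation `E`: a sequence of pairwise
distinct vertices `v 0 = s, …, v k = d` together with strictly increasing departure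
times `t 1 < ⋯ < t k` (here `t i` is the time of the edge from `v i` to `v (i+1)`),
each edge present at its departure time, all departure times `≥ tα`, and arrival
`t k + 1 ≤ tω`.  The empty path (`k = 0`) requires `s = d`. -/
structure TPath (V : Type*) (E : ℕ → V → V → Prop) (s d : V) (tα tω : ℕ) where
  k : ℕ
  v : Fin (k + 1) → V
  t : Fin k → ℕ
  hv0 : v 0 = s
  hvk : v (Fin.last k) = d
  inj : Function.Injective v
  mono : StrictMono t
  hedge : ∀ i : Fin k, E (t i) (v i.castSucc) (v i.succ)
  hstart : ∀ i : Fin k, tα ≤ t i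
  hend : ∀ i : Fin k, t i + 1 ≤ tω

namespace TPath

variable {V : Type*} {E : ℕ → V → V → Prop} {s d : V} {tα tω : ℕ}

/-- Ending (arrival) time of a temporal path: `t k + 1`; the empty path arrives at `tα`. -/
def endTime (π : TPath V E s d tα tω) : ℕ :=
  if h : 0 < π.k then π.t ⟨π.k - 1, by omega⟩ + 1 else tα

/-- `x` is the index of the first point of contact of the path `π` with the decoy set `C`:
`π.v x ∈ C`, and `x` is the least such index. -/
def hitsAt (π : TPath V E s d tα tω) (C : Set V) (x : Fin (π.k + 1)) : Prop :=
  π.v x ∈ C ∧ ∀ j : Fin (π.k + 1), π.v j ∈ C → x ≤ j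

/-- Index of the first vertex of `π` lying in `C` (`sInf ∅ = 0` if there is none). -/
noncomputable def firstContact (π : TPath V E s d tα tω) (C : Set V) : ℕ :=
  sInf {i : ℕ | ∃ h : i < π.k + 1, π.v ⟨i, h⟩ ∈ C}

/-- Response time `RT(π, C) = t k − t x` where `v x` is the first point of contact of `π`
with `C` (entered via the edge with time `t x`); junk value `0` if `π` does not meet `C`
properly. -/
noncomputable def RT (π : TPath V E s d tα tω) (C : Set V) : ℕ :=
  if h : 0 < π.firstContact C ∧ π.firstContact C ≤ π.k ∧ 0 < π.k then
    π.t ⟨π.k - 1, by omega⟩ - π.t ⟨π.firstContact C - 1, by omega⟩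
  else 0

end TPath

/-- Earliest arrival time from the source set `S` to `x` within `[tα, tω]`
(`⊤ = ∞` if unreachable; it is `tα` for `x ∈ S`, realized by the empty path). -/
noncomputable def ea {V : Type*} (E : ℕ → V → V → Prop) (S : Set V) (tα tω : ℕ)
    (x : V) : ℕ∞ :=
  sInf {n : ℕ∞ | ∃ s ∈ S, ∃ π : TPath V E s x tα tω, n = (π.endTime : ℕ∞)}

/-- `C` is a temporal `(S,d)`-cut within `[tα, tω]`: every temporal `(s,d)`-path within
`[tα, tω]` with `s ∈ S` contains a vertex of `C`. -/
def IsTemporalCut {V : Type*} (E : ℕ → V → V → Prop) (S : Set V) (d : V) (tα tω : ℕ)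
    (C : Set V) : Prop :=
  ∀ s ∈ S, ∀ π : TPath V E s d tα tω, ∃ i, π.v i ∈ C

namespace TPath

variable {V : Type*} {E : ℕ → V → V → Prop} {s d u : V} {tα tω : ℕ}

lemma tα_le_endTime (π : TPath V E s d tα tω) : tα ≤ π.endTime := by
  unfold endTime
  split
  · exact le_trans (π.hstart _) (Nat.le_succ _)
  · exact le_rfl

lemma endTime_of_pos (π : TPath V E s d tα tω) (h : 0 < π.k) :
    π.endTime = π.t ⟨π.k - 1, by omega⟩ + 1 := dif_pos h

lemma t_add_one_le_endTime (π : TPath V E s d tα tω) (i : Fin π.k) :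
    π.t i + 1 ≤ π.endTime := by
  have hk : 0 < π.k := i.pos
  rw [π.endTime_of_pos hk]
  have : π.t i ≤ π.t ⟨π.k - 1, by omega⟩ :=
    π.mono.monotone (by simp [Fin.le_def]; omega)
  omega

/-- The empty path. -/
def empty (E : ℕ → V → V → Prop) (s : V) (tα tω : ℕ) : TPath V E s s tα tω where
  k := 0
  v := fun _ => s
  t := Fin.elim0
  hv0 := rfl
  hvk := rfl
  inj := fun a b _ => Fin.ext (by omega)
  mono := fun a => a.elim0
  hedge := fun i => i.elim0
  hstart := fun i => i.elim0
  hend := fun i => i.elim0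

lemma empty_endTime : (empty E s tα tω).endTime = tα := rfl

/-- Prefix of a path up to index `j`. -/
def take (π : TPath V E s d tα tω) (j : Fin (π.k + 1)) : TPath V E s (π.v j) tα tω where
  k := j.val
  v := fun i => π.v ⟨i.val, by have := i.isLt; have := j.isLt; omega⟩
  t := fun i => π.t ⟨i.val, by have := i.isLt; have := j.isLt; omega⟩
  hv0 := by
    show π.v ⟨(0 : Fin (j.val+1)).val, _⟩ = s
    simp only [Fin.val_zero, Fin.mk_zero]
    exact π.hv0
  hvk := by congr 1
  inj := by
    intro a b h
    have := π.inj h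
    exact Fin.ext (by simpa [Fin.ext_iff] using this)
  mono := by
    intro a b hab
    exact π.mono (show (⟨a.val, _⟩ : Fin π.k) < ⟨b.val, _⟩ from hab)
  hedge := by
    intro i
    have h := π.hedge ⟨i.val, by have := i.isLt; have := j.isLt; omega⟩
    convert h using 2 <;> exact Fin.ext rfl
  hstart := fun i => π.hstart _
  hend := fun i => π.hend _

lemma take_endTime_of_pos (π : TPath V E s d tα tω) (j : Fin (π.k + 1)) (hj : 0 < j.val) :
    (π.take j).endTime = π.t ⟨j.val - 1, by have := j.isLt; omega⟩ + 1 := by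
  unfold endTime
  rw [dif_pos (show 0 < (π.take j).k from hj)]
  rfl

lemma take_endTime_of_zero (π : TPath V E s d tα tω) (j : Fin (π.k + 1)) (hj : j.val = 0) :
    (π.take j).endTime = tα := by
  unfold endTime
  rw [dif_neg (show ¬ 0 < (π.take j).k from by simp only [take]; omega)]

/-- Extend a path by one edge at the end. -/
def snocPath (π : TPath V E s u tα tω) (w : V) (tn : ℕ)
    (hE : E tn u w) (htα : tα ≤ tn) (htω : tn + 1 ≤ tω)
    (hlt : ∀ i, π.t i < tn) (hnv : ∀ i, π.v i ≠ w) :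
    TPath V E s w tα tω where
  k := π.k + 1
  v := Fin.snoc π.v w
  t := Fin.snoc π.t tn
  hv0 := by
    rw [show (0 : Fin (π.k+2)) = Fin.castSucc 0 from rfl, Fin.snoc_castSucc]
    exact π.hv0
  hvk := Fin.snoc_last _ _
  inj := by
    intro a b h
    induction a using Fin.lastCases with
    | last =>
      induction b using Fin.lastCases with
      | last => rfl
      | cast b =>
        rw [Fin.snoc_last, Fin.snoc_castSucc] at h
        exact absurd h.symm (hnv b)
    | cast a =>
      induction b using Fin.lastCases with
      | last =>
        rw [Fin.snoc_last, Fin.snoc_castSucc] at h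
        exact absurd h (hnv a)
      | cast b =>
        rw [Fin.snoc_castSucc, Fin.snoc_castSucc] at h
        rw [π.inj h]
  mono := by
    intro a b hab
    induction b using Fin.lastCases with
    | last =>
      induction a using Fin.lastCases with
      | last => exact absurd hab (lt_irrefl _)
      | cast a => rw [Fin.snoc_last, Fin.snoc_castSucc]; exact hlt a
    | cast b =>
      induction a using Fin.lastCases with
      | last =>
        exfalso
        have h1 : π.k < b.val := hab
        have := b.isLt
        omega
      | cast a =>
        rw [Fin.snoc_castSucc, Fin.snoc_castSucc]
        exact π.mono (show a < b from hab)
  hedge := by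
    intro i
    induction i using Fin.lastCases with
    | last =>
      rw [Fin.snoc_last, Fin.succ_last, Fin.snoc_last,
        show (Fin.last π.k).castSucc = Fin.castSucc (Fin.last π.k) from rfl,
        Fin.snoc_castSucc, π.hvk]
      exact hE
    | cast i =>
      rw [Fin.snoc_castSucc,
        show (i.castSucc).castSucc = Fin.castSucc i.castSucc from rfl,
        Fin.snoc_castSucc, Fin.succ_castSucc, Fin.snoc_castSucc]
      exact π.hedge i
  hstart := by
    intro i
    induction i using Fin.lastCases with
    | last => rw [Fin.snoc_last]; exact htα
    | cast i => rw [Fin.snoc_castSucc]; exact π.hstart i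
  hend := by
    intro i
    induction i using Fin.lastCases with
    | last => rw [Fin.snoc_last]; exact htω
    | cast i => rw [Fin.snoc_castSucc]; exact π.hend i

lemma snocPath_endTime (π : TPath V E s u tα tω) (w : V) (tn : ℕ)
    (hE : E tn u w) (htα : tα ≤ tn) (htω : tn + 1 ≤ tω)
    (hlt : ∀ i, π.t i < tn) (hnv : ∀ i, π.v i ≠ w) :
    (π.snocPath w tn hE htα htω hlt hnv).endTime = tn + 1 := by
  rw [(π.snocPath w tn hE htα htω hlt hnv).endTime_of_pos (by exact Nat.succ_pos _)]
  congr 1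
  show (Fin.snoc π.t tn : Fin (π.k+1) → ℕ) ⟨π.k + 1 - 1, _⟩ = tn
  rw [show (⟨π.k + 1 - 1, by omega⟩ : Fin (π.k+1)) = Fin.last π.k from Fin.ext rfl,
    Fin.snoc_last]

end TPath

/-- Bellman-style recurrence for earliest arrival times: `ea s = tα` for
every source `s ∈ S`, and for `v ∉ S`, `ea v` is the least `t + 1` over edges `(u,v)`
at a time `t` with `tα ≤ t`, `t + 1 ≤ tω` and `ea u ≤ t` (`⊤` if there is none). -/
theorem ea_recurrence {V : Type*} [Fintype V] (E : ℕ → V → V → Prop)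
    (hloop : ∀ t u, ¬ E t u u) (S : Set V) (tα tω : ℕ) :
    (∀ s ∈ S, ea E S tα tω s = (tα : ℕ∞)) ∧
    ∀ v ∉ S, ea E S tα tω v =
      sInf {n : ℕ∞ | ∃ u : V, ∃ t : ℕ, E t u v ∧ tα ≤ t ∧ t + 1 ≤ tω ∧
        ea E S tα tω u ≤ (t : ℕ∞) ∧ n = (t : ℕ∞) + 1} := by
  constructor
  · intro s hs
    apply le_antisymm
    · exact sInf_le ⟨s, hs, TPath.empty E s tα tω, rfl⟩
    · apply le_sInf
      rintro n ⟨s', hs', π, rfl⟩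
      exact_mod_cast π.tα_le_endTime
  · intro v hv
    apply le_antisymm
    · apply le_sInf
      rintro n ⟨u, tn, hE, htα, htω, heau, rfl⟩
      -- extract a path to u with endTime ≤ tn
      have hne : ∃ m ∈ {n : ℕ∞ | ∃ s ∈ S, ∃ π : TPath V E s u tα tω,
          n = (π.endTime : ℕ∞)}, m ≤ (tn : ℕ∞) := by
        by_contra hc
        push_neg at hc
        have h1 : (tn : ℕ∞) + 1 ≤ ea E S tα tω u := by
          apply le_sInf
          intro m hm
          have := hc m hm
          exact Order.add_one_le_of_lt this
        have h2 : (tn : ℕ∞) + 1 ≤ (tn : ℕ∞) := h1.trans heau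
        have h3 : ((tn + 1 : ℕ) : ℕ∞) ≤ ((tn : ℕ) : ℕ∞) := by push_cast; exact h2
        have h4 : tn + 1 ≤ tn := Nat.cast_le.mp h3
        omega
      obtain ⟨m, ⟨s, hs, π, rfl⟩, hm⟩ := hne
      have hπ : π.endTime ≤ tn := by exact_mod_cast hm
      by_cases hvon : ∃ j, π.v j = v
      · obtain ⟨j, hj⟩ := hvon
        subst hj
        have hj0 : j.val ≠ 0 := by
          intro h0
          apply hv
          have hj00 : j = 0 := Fin.ext h0
          have hv0 : π.v j = s := by rw [hj00, π.hv0]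
          rw [hv0]; exact hs
        calc ea E S tα tω (π.v j) ≤ ((π.take j).endTime : ℕ∞) :=
              sInf_le ⟨s, hs, π.take j, rfl⟩
          _ ≤ (tn : ℕ∞) + 1 := by
              rw [π.take_endTime_of_pos j (by omega)]
              have h1 : π.t ⟨j.val - 1, by have := j.isLt; omega⟩ + 1 ≤ π.endTime :=
                π.t_add_one_le_endTime _
              have : π.t ⟨j.val - 1, by have := j.isLt; omega⟩ + 1 ≤ tn + 1 := by omega
              exact_mod_cast Nat.cast_le.mpr this
      · push_neg at hvon
        have hlt : ∀ i, π.t i < tn := fun i => by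
          have := π.t_add_one_le_endTime i
          omega
        refine sInf_le ⟨s, hs, π.snocPath v tn hE htα htω hlt hvon, ?_⟩
        rw [π.snocPath_endTime v tn hE htα htω hlt hvon]
        push_cast
        ring
    · apply le_sInf
      rintro n ⟨s, hs, π, rfl⟩
      have hk : 0 < π.k := by
        by_contra h
        apply hv
        have h0 : π.v 0 = π.v (Fin.last π.k) := by
          congr 1; exact Fin.ext (by simp; omega)
        rw [← π.hvk, ← h0, π.hv0]
        exact hs
      have hi : π.k - 1 < π.k := by omega
      set i : Fin π.k := ⟨π.k - 1, hi⟩ with hidef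
      apply sInf_le
      refine ⟨π.v i.castSucc, π.t i, ?_, π.hstart i, π.hend i, ?_, ?_⟩
      · have h := π.hedge i
        have hsucc : i.succ = Fin.last π.k := Fin.ext (by simp [hidef]; omega)
        rwa [hsucc, π.hvk] at h
      · calc ea E S tα tω (π.v i.castSucc) ≤ ((π.take i.castSucc).endTime : ℕ∞) :=
              sInf_le ⟨s, hs, π.take i.castSucc, rfl⟩
          _ ≤ (π.t i : ℕ∞) := by
              apply Nat.cast_le.mpr
              by_cases h0 : π.k - 1 = 0
              · rw [π.take_endTime_of_zero _ (by simp [hidef]; omega)]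
                exact π.hstart i
              · rw [π.take_endTime_of_pos _ (by simp [hidef]; omega)]
                have hlt : π.t ⟨(i.castSucc : Fin (π.k + 1)).val - 1,
                    by have := (i.castSucc : Fin (π.k + 1)).isLt; omega⟩ < π.t i :=
                  π.mono (show (⟨(i.castSucc : Fin (π.k + 1)).val - 1, _⟩ : Fin π.k) < i
                    from by simp [Fin.lt_def, hidef]; omega)
                exact hlt
      · rw [π.endTime_of_pos hk]
        push_cast
        rfl
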